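/- Fix an integer n ≥ 2, a real number M > 0 and a real number r > 0. Then, as ℓ → ∞ through the integers, the Zerilli-type potentials converge: V_{1,nℓ}(r) + V_{2,nℓ}(r) + V_{3,nℓ}(r) → (1/(2r²)) [ (n² − 2n + 8) − (5n² − 10n + 8)(2M/r^{n−1}) ]. -/

import Mathlib

open Filter

/-- `D_{nℓ}(r) = n(n+1)M r^{1-n} + (ℓ-1)(n+ℓ)`. -/
noncomputable def Dnl (n ℓ : ℕ) (M r : ℝ) : ℝ :=
  (n:ℝ)*((n:ℝ)+1)*M / r^(n-1) + ((ℓ:ℝ)-1)*((n:ℝ)+(ℓ:ℝ))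

/-- `V_{1,nℓ}(r) = -r^{-2}(ℓ(ℓ+n-1) - 2n)`. -/
noncomputable def V1nl (n ℓ : ℕ) (r : ℝ) : ℝ :=
  -((ℓ:ℝ)*((ℓ:ℝ)+(n:ℝ)-1) - 2*(n:ℝ)) / r^2

/-- `V_{2,nℓ}(r) = r^{-2}[ (n²-10n+16)/4 - ((3n²-12n+16)/4)(2M/r^{n-1}) ]`. -/
noncomputable def V2nl (n : ℕ) (M r : ℝ) : ℝ :=
  (((n:ℝ)^2 - 10*(n:ℝ) + 16)/4
    - ((3*(n:ℝ)^2 - 12*(n:ℝ) + 16)/4) * (2*M/r^(n-1))) / r^2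

/-- The component `V_{3,nℓ}` of the Zerilli-type potential. -/
noncomputable def V3nl (n ℓ : ℕ) (M r : ℝ) : ℝ :=
  (((ℓ:ℝ)-1)^2*((n:ℝ)+(ℓ:ℝ))^2*(n:ℝ)*((n:ℝ)+2)
    + 4*((ℓ:ℝ)-1)^3*((n:ℝ)+(ℓ:ℝ))^3
    - (6*((ℓ:ℝ)-1)*((n:ℝ)+(ℓ:ℝ))*((n:ℝ)-2)*(n:ℝ)^2*((n:ℝ)+1)*M
        + 6*((ℓ:ℝ)-1)^2*((n:ℝ)+(ℓ:ℝ))^2*((n:ℝ)-4)*(n:ℝ)*M) / r^(n-1)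
    + (4*((ℓ:ℝ)-1)*((n:ℝ)+(ℓ:ℝ))*(n:ℝ)*((n:ℝ)+1)*(2*(n:ℝ)^2-3*(n:ℝ)+4)*M^2
        + ((n:ℝ)-4)*((n:ℝ)-2)*(n:ℝ)^2*((n:ℝ)+1)^2*M^2) / r^(2*n-2)
    + 2*(n:ℝ)^4*((n:ℝ)+1)^2*M^3 / r^(3*n-3))
  / (4*r^2*(Dnl n ℓ M r)^2)

/-! Put `u = M / r^(n-1)`. The potential depends on `ℓ` only through `D = D_{nℓ}(r)`, since
`(ℓ-1)(n+ℓ) = D - n(n+1)u` and `ℓ(ℓ+n-1) = (ℓ-1)(n+ℓ) + n`. As a function of `D`, the numerator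
of `V_3` is a cubic with leading term `4D³`, which cancels the term `-D/r²` of `V_1`; what remains
is the limit plus `B/D + C/D²` with coefficients independent of `ℓ`, and `D → ∞` as `ℓ → ∞`. -/

open Topology

lemma tendsto_const_add_div_add_div_sq {α : Type*} {l : Filter α} {D : α → ℝ}
    (hD : Tendsto D l atTop) (L B C : ℝ) :
    Tendsto (fun x => L + B / D x + C / D x ^ 2) l (𝓝 L) := by
  have hinv : Tendsto (fun x => (D x)⁻¹) l (𝓝 0) := hD.inv_tendsto_atTop
  simpa [div_eq_mul_inv] using
    (tendsto_const_nhds.add (hinv.const_mul B)).add ((hinv.pow 2).const_mul C)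

lemma tendsto_Dnl_atTop (n : ℕ) (M r : ℝ) :
    Tendsto (fun ℓ : ℕ => Dnl n ℓ M r) atTop atTop := by
  refine tendsto_atTop_add_const_left _ _ (Tendsto.atTop_mul_atTop₀ ?_ ?_)
  · exact tendsto_atTop_add_const_right _ _ tendsto_natCast_atTop_atTop
  · exact tendsto_atTop_add_const_left _ _ tendsto_natCast_atTop_atTop

lemma V1nl_add_V2nl_add_V3nl (n ℓ : ℕ) (M r : ℝ) (hr : r ≠ 0) (hD : Dnl n ℓ M r ≠ 0) :
    V1nl n ℓ r + V2nl n M r + V3nl n ℓ M r =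
      (1/(2*r^2)) * (((n:ℝ)^2 - 2*(n:ℝ) + 8) - (5*(n:ℝ)^2 - 10*(n:ℝ) + 8) * (2*M/r^(n-1)))
      + 2*n*((n:ℝ)^2-1)*(M/r^(n-1))*((4*n-2)*(M/r^(n-1)) - n) / r^2 / Dnl n ℓ M r
      + 2*n^2*((n:ℝ)^2-1)^2*(M/r^(n-1))^2*(1 - 2*(M/r^(n-1))) / r^2 / Dnl n ℓ M r ^ 2 := by
  have h2 : r^(2*n-2) = (r^(n-1))^2 := by rw [← pow_mul]; congr 1; omega
  have h3 : r^(3*n-3) = (r^(n-1))^3 := by rw [← pow_mul]; congr 1; omega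
  unfold V1nl V2nl V3nl Dnl at *
  rw [h2, h3]
  have ha : r^(n-1) ≠ 0 := pow_ne_zero _ hr
  generalize r^(n-1) = a at ha hD ⊢
  obtain ⟨u, rfl⟩ : ∃ u, M = a * u := ⟨M / a, by field_simp⟩
  have hu (c : ℝ) : c * (a * u) / a = c * u := by field_simp
  simp only [hu, mul_div_cancel_left₀ _ ha] at hD ⊢
  -- `field_simp` clears the denominator only when `D` is an atom
  generalize hE : (n:ℝ) * (n + 1) * u + (ℓ - 1) * (n + ℓ) = D at hD ⊢
  field_simp
  rw [← hE]
  ring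

theorem zerilli_potential_limit
    (n : ℕ) (M r : ℝ) (hr : 0 < r) :
    Tendsto (fun ℓ : ℕ => V1nl n ℓ r + V2nl n M r + V3nl n ℓ M r) atTop
      (nhds ((1/(2*r^2)) * (((n:ℝ)^2 - 2*(n:ℝ) + 8)
        - (5*(n:ℝ)^2 - 10*(n:ℝ) + 8) * (2*M/r^(n-1))))) := by
  refine .congr' ?_ (tendsto_const_add_div_add_div_sq (tendsto_Dnl_atTop n M r) _ ?B ?C)
  filter_upwards [(tendsto_Dnl_atTop n M r).eventually_ne_atTop 0] with ℓ hD
  exact (V1nl_add_V2nl_add_V3nl n ℓ M r hr.ne' hD).symm
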